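/- arXiv:1305.2970 — 3 statements merged into one kernel-verified Lean document; each statement's English description precedes it below -/
import Mathlib

section
/- Let K ⊆ ℝ^n be a nonempty compact set, let A ⊆ ℕ^n be finite, and suppose ℝ[x]_A is K-full. Then a polynomial f ∈ ℝ[x]_A lies in the interior of the cone P_A(K) (interior taken in the finite-dimensional space ℝ[x]_A) if and only if f(u) > 0 for every u ∈ K. -/
open MeasureTheory MvPolynomial Finset

noncomputable section

/-- Exponent vectors `α ∈ ℕ^n`. -/
abbrev Exp (n : ℕ) := Fin n → ℕ

/-- Evaluation of the monomial `x^α` at a point `u ∈ ℝ^n`. -/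
def monoEval {n : ℕ} (α : Exp n) (u : Fin n → ℝ) : ℝ := ∏ i, u i ^ α i

/-- A polynomial in `ℝ[x]_A` is identified with its coefficient vector `p : A → ℝ`;
this is its evaluation at `u`. -/
def evalA {n : ℕ} (A : Finset (Exp n)) (p : A → ℝ) (u : Fin n → ℝ) : ℝ :=
  ∑ α : A, p α * monoEval (α : Exp n) u

/-- The pairing `⟨p, y⟩ = ∑_{α ∈ A} p_α y_α` between `ℝ[x]_A` and `ℝ^A`. -/
def pairA {n : ℕ} (A : Finset (Exp n)) (p y : A → ℝ) : ℝ :=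
  ∑ α : A, p α * y α

/-- The cone `P_A(K)` of polynomials in `ℝ[x]_A` nonnegative on `K`. -/
def PAcone {n : ℕ} (A : Finset (Exp n)) (K : Set (Fin n → ℝ)) : Set (A → ℝ) :=
  {p | ∀ u ∈ K, 0 ≤ evalA A p u}

/-- The cone `R_A(K)` of A-truncated moment sequences admitting a representing
(positive Borel) measure supported in `K`. -/
def RAcone {n : ℕ} (A : Finset (Exp n)) (K : Set (Fin n → ℝ)) : Set (A → ℝ) :=
  {y | ∃ μ : Measure (Fin n → ℝ), μ Kᶜ = 0 ∧
        ∀ α : A, Integrable (monoEval (α : Exp n)) μ ∧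
                 y α = ∫ u, monoEval (α : Exp n) u ∂μ}

/-- `ℝ[x]_A` is `K`-full: some `p ∈ ℝ[x]_A` is strictly positive on `K`. -/
def KFull {n : ℕ} (A : Finset (Exp n)) (K : Set (Fin n → ℝ)) : Prop :=
  ∃ p : A → ℝ, ∀ u ∈ K, 0 < evalA A p u

/-- The semialgebraic set `K = {x : h(x) = 0, g(x) ≥ 0}`. -/
def semiK {n m1 m2 : ℕ} (h : Fin m1 → MvPolynomial (Fin n) ℝ)
    (g : Fin m2 → MvPolynomial (Fin n) ℝ) : Set (Fin n → ℝ) :=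
  {x | (∀ i, eval x (h i) = 0) ∧ (∀ j, 0 ≤ eval x (g j))}

/-- `I_{2k}(h) = h_1 ℝ[x]_{2k - deg h_1} + ⋯ + h_{m1} ℝ[x]_{2k - deg h_{m1}}`. -/
def IhSet {n m1 : ℕ} (h : Fin m1 → MvPolynomial (Fin n) ℝ) (k : ℕ) :
    Set (MvPolynomial (Fin n) ℝ) :=
  {p | ∃ q : Fin m1 → MvPolynomial (Fin n) ℝ,
        (∀ i, q i = 0 ∨ (h i).totalDegree + (q i).totalDegree ≤ 2 * k) ∧
        p = ∑ i, h i * q i}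

/-- `Q_k(g) = Σ_{n,2k} + g_1 Σ_{n,2k-deg g_1} + ⋯ + g_{m2} Σ_{n,2k-deg g_{m2}}`. -/
def QgSet {n m2 : ℕ} (g : Fin m2 → MvPolynomial (Fin n) ℝ) (k : ℕ) :
    Set (MvPolynomial (Fin n) ℝ) :=
  {p | ∃ σ₀ : MvPolynomial (Fin n) ℝ, ∃ σ : Fin m2 → MvPolynomial (Fin n) ℝ,
        IsSumSq σ₀ ∧ σ₀.totalDegree ≤ 2 * k ∧
        (∀ j, IsSumSq (σ j) ∧ (σ j = 0 ∨ (g j).totalDegree + (σ j).totalDegree ≤ 2 * k)) ∧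
        p = σ₀ + ∑ j, g j * σ j}

/-- The truncated preordering `I_{2k}(h) + Q_k(g)`. -/
def IQSet {n m1 m2 : ℕ} (h : Fin m1 → MvPolynomial (Fin n) ℝ)
    (g : Fin m2 → MvPolynomial (Fin n) ℝ) (k : ℕ) : Set (MvPolynomial (Fin n) ℝ) :=
  {p | ∃ a ∈ IhSet h k, ∃ b ∈ QgSet g k, p = a + b}

/-- `I(h) + Q(g)` is archimedean: `R - ‖x‖² ∈ I_{2k}(h) + Q_k(g)` for some `R > 0` and `k`. -/
def ArchQM {n m1 m2 : ℕ} (h : Fin m1 → MvPolynomial (Fin n) ℝ)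
    (g : Fin m2 → MvPolynomial (Fin n) ℝ) : Prop :=
  ∃ R : ℝ, 0 < R ∧ ∃ k : ℕ, (C R - ∑ i : Fin n, X i ^ 2) ∈ IQSet h g k

/-- The Riesz functional `L_z(p) = ∑_α p_α z_α` of a (truncated) moment sequence `z`. -/
def riesz {n : ℕ} (z : Exp n → ℝ) (p : MvPolynomial (Fin n) ℝ) : ℝ :=
  ∑ α ∈ p.support, coeff α p * z α

/-- `Φ_k(g)`: all localizing matrices `L_{g_j}^{(k)}(z) ⪰ 0` for `j = 0,1,…,m2`
(with `g_0 = 1`), expressed via the quadratic forms `L_z(g_j p²) ≥ 0`. -/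
def PhiSet {n m2 : ℕ} (g : Fin m2 → MvPolynomial (Fin n) ℝ) (k : ℕ) : Set (Exp n → ℝ) :=
  {z | (∀ p : MvPolynomial (Fin n) ℝ, (p ^ 2).totalDegree ≤ 2 * k → 0 ≤ riesz z (p ^ 2)) ∧
       (∀ j, ∀ p : MvPolynomial (Fin n) ℝ,
          (g j * p ^ 2).totalDegree ≤ 2 * k → 0 ≤ riesz z (g j * p ^ 2))}

/-- `E_k(h)`: all localizing matrices `L_{h_i}^{(k)}(z) = 0`, expressed via the
vanishing of the quadratic forms `L_z(h_i p²)`. -/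
def ESet {n m1 : ℕ} (h : Fin m1 → MvPolynomial (Fin n) ℝ) (k : ℕ) : Set (Exp n → ℝ) :=
  {z | ∀ i, ∀ p : MvPolynomial (Fin n) ℝ,
        (h i * p ^ 2).totalDegree ≤ 2 * k → riesz z (h i * p ^ 2) = 0}

/-- Restriction `z|_A` of a moment sequence to the indices in `A`. -/
def restrA {n : ℕ} (A : Finset (Exp n)) (z : Exp n → ℝ) : A → ℝ := fun α => z α

/-- `deg(A) = max { |α| : α ∈ A }`. -/
def degA {n : ℕ} (A : Finset (Exp n)) : ℕ := A.sup fun α => ∑ i, α i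

/-- The polynomial `∑_{α ∈ A} p_α x^α` associated to a coefficient vector `p : A → ℝ`. -/
def toPoly {n : ℕ} (A : Finset (Exp n)) (p : A → ℝ) : MvPolynomial (Fin n) ℝ :=
  ∑ α : A, monomial (Finsupp.equivFunOnFinite.symm (α : Exp n)) (p α)

/-- `c(λ) = c - λ_1 a_1 - ⋯ - λ_m a_m` (as coefficient vectors in `ℝ[x]_A`). -/
def cLam {n m : ℕ} {A : Finset (Exp n)} (c : A → ℝ) (a : Fin m → (A → ℝ))
    (lam : Fin m → ℝ) : A → ℝ :=
  c - ∑ i, lam i • a i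

/-- Feasibility of `w` for the `k`-th primal relaxation (4.3). -/
def RelaxFeas {n m1 m2 m : ℕ} (h : Fin m1 → MvPolynomial (Fin n) ℝ)
    (g : Fin m2 → MvPolynomial (Fin n) ℝ) (A : Finset (Exp n))
    (a : Fin m → (A → ℝ)) (b : Fin m → ℝ) (k : ℕ) (w : Exp n → ℝ) : Prop :=
  w ∈ PhiSet g k ∩ ESet h k ∧ ∀ i, pairA A (a i) (restrA A w) = b i

/-- `w` is a minimizer of the `k`-th primal relaxation (4.3). -/
def RelaxMin {n m1 m2 m : ℕ} (h : Fin m1 → MvPolynomial (Fin n) ℝ)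
    (g : Fin m2 → MvPolynomial (Fin n) ℝ) (A : Finset (Exp n)) (c : A → ℝ)
    (a : Fin m → (A → ℝ)) (b : Fin m → ℝ) (k : ℕ) (w : Exp n → ℝ) : Prop :=
  RelaxFeas h g A a b k w ∧
  ∀ w' : Exp n → ℝ, RelaxFeas h g A a b k w' →
    pairA A c (restrA A w) ≤ pairA A c (restrA A w')

/-- The exponents `α ∈ ℕ^n` with `|α| ≤ r`, as a finite set. -/
def expSet (n r : ℕ) : Finset (Exp n) :=
  (Fintype.piFinset fun _ : Fin n => Finset.range (r + 1)).filter fun α => ∑ i, α i ≤ r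

/-- The `r`-th order moment matrix `M_r(z)`, with rows and columns indexed by
exponents of degree `≤ r` and entries `z_{α+β}`. -/
def momMat {n : ℕ} (z : Exp n → ℝ) (r : ℕ) :
    Matrix (expSet n r) (expSet n r) ℝ :=
  fun α β => z ((α : Exp n) + (β : Exp n))

/-- The degree bound `d_K = max{1, ⌈deg h_i / 2⌉, ⌈deg g_j / 2⌉}`. -/
def dKnum {n m1 m2 : ℕ} (h : Fin m1 → MvPolynomial (Fin n) ℝ)
    (g : Fin m2 → MvPolynomial (Fin n) ℝ) : ℕ :=
  max 1 (max (Finset.univ.sup fun i => ((h i).totalDegree + 1) / 2)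
             (Finset.univ.sup fun j => ((g j).totalDegree + 1) / 2))

/-- The truncation `z|_{2t}` is flat: the localizing conditions hold at order `t`
and `rank M_{t - d_K}(z) = rank M_t(z)`. -/
def IsFlat {n m1 m2 : ℕ} (h : Fin m1 → MvPolynomial (Fin n) ℝ)
    (g : Fin m2 → MvPolynomial (Fin n) ℝ) (t : ℕ) (z : Exp n → ℝ) : Prop :=
  z ∈ PhiSet g t ∩ ESet h t ∧
  (momMat z (t - dKnum h g)).rank = (momMat z t).rank

/-- `u` is a KKT point of `min f(x) s.t. h(x) = 0, g(x) ≥ 0`. -/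
def IsKKT {n m1 m2 : ℕ} (h : Fin m1 → MvPolynomial (Fin n) ℝ)
    (g : Fin m2 → MvPolynomial (Fin n) ℝ) (f : MvPolynomial (Fin n) ℝ)
    (u : Fin n → ℝ) : Prop :=
  u ∈ semiK h g ∧ ∃ μ : Fin m1 → ℝ, ∃ ν : Fin m2 → ℝ,
    (∀ j, 0 ≤ ν j) ∧ (∀ j, ν j * eval u (g j) = 0) ∧
    ∀ l : Fin n, eval u (pderiv l f) =
      ∑ i, μ i * eval u (pderiv l (h i)) + ∑ j, ν j * eval u (pderiv l (g j))


/-! A polynomial strictly positive on a compact set stays positive under small perturbations of its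
coefficients, since evaluation is jointly continuous in the coefficients and the point (tube lemma).
Conversely, if `f` is interior to `P_A(K)` and `p` is positive on `K`, then `f - t p ∈ P_A(K)` for some
`t > 0`, so `f ≥ t p > 0` on `K`. -/

lemma evalA_sub_smul {n : ℕ} (A : Finset (Exp n)) (f p : A → ℝ) (t : ℝ) (u : Fin n → ℝ) :
    evalA A (f - t • p) u = evalA A f u - t * evalA A p u := by
  simp only [evalA, Pi.sub_apply, Pi.smul_apply, smul_eq_mul, sub_mul, Finset.sum_sub_distrib,
    Finset.mul_sum, mul_assoc]

lemma continuous_evalA_uncurry {n : ℕ} (A : Finset (Exp n)) :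
    Continuous fun x : (A → ℝ) × (Fin n → ℝ) => evalA A x.1 x.2 := by
  unfold evalA monoEval
  fun_prop

lemma isOpen_setOf_forall_pos_evalA {n : ℕ} (A : Finset (Exp n)) {K : Set (Fin n → ℝ)}
    (hK : IsCompact K) : IsOpen {p : A → ℝ | ∀ u ∈ K, 0 < evalA A p u} := by
  refine isOpen_iff_eventually.2 fun f hf => hK.eventually_forall_of_forall_eventually fun u hu => ?_
  exact (continuous_evalA_uncurry A).continuousAt.eventually (lt_mem_nhds (hf u hu))

lemma pos_of_mem_interior_PAcone {n : ℕ} {A : Finset (Exp n)} {K : Set (Fin n → ℝ)}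
    (hfull : KFull A K) {f : A → ℝ} (hf : f ∈ interior (PAcone A K)) :
    ∀ u ∈ K, 0 < evalA A f u := by
  obtain ⟨p, hp⟩ := hfull
  have hpath : Filter.Tendsto (fun t : ℝ => f - t • p) (nhdsWithin 0 (Set.Ioi 0)) (nhds f) := by
    have : Continuous fun t : ℝ => f - t • p := by fun_prop
    simpa using (this.tendsto 0).mono_left nhdsWithin_le_nhds
  obtain ⟨t, ht_mem, ht_pos⟩ :=
    ((hpath.eventually (isOpen_interior.mem_nhds hf)).and self_mem_nhdsWithin).exists
  intro u hu
  have hnonneg := interior_subset ht_mem u hu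
  rw [evalA_sub_smul] at hnonneg
  nlinarith [hp u hu, ht_pos]

theorem statement_0_general {n : ℕ} {A : Finset (Exp n)}
    {K : Set (Fin n → ℝ)} (hKcpt : IsCompact K)
    (hfull : KFull A K) (f : A → ℝ) :
    f ∈ interior (PAcone A K) ↔ ∀ u ∈ K, 0 < evalA A f u :=
  ⟨pos_of_mem_interior_PAcone hfull, fun hpos =>
    interior_maximal (fun _ hq u hu => (hq u hu).le) (isOpen_setOf_forall_pos_evalA A hKcpt) hpos⟩

/-- For a nonempty compact `K` and `K`-full `ℝ[x]_A`,
`f ∈ ℝ[x]_A` is interior to `P_A(K)` iff `f > 0` on `K`. -/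
theorem statement_0 {n : ℕ} (hn : 1 ≤ n) {A : Finset (Exp n)} (hA : A.Nonempty)
    {K : Set (Fin n → ℝ)} (hKne : K.Nonempty) (hKcpt : IsCompact K)
    (hfull : KFull A K) (f : A → ℝ) :
    f ∈ interior (PAcone A K) ↔ ∀ u ∈ K, 0 < evalA A f u :=
  statement_0_general hKcpt hfull f
end
end

section
/- Let K ⊆ ℝ^n be a nonempty compact set, let A ⊆ ℕ^n be finite, and suppose ℝ[x]_A is K-full. Then R_A(K) equals the dual cone of P_A(K), i.e., R_A(K) = {y ∈ ℝ^A : ⟨p, y⟩ ≥ 0 for all p ∈ P_A(K)}. -/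
open MeasureTheory MvPolynomial Finset

noncomputable section

/-! Integrating a polynomial that is nonnegative on `K` against a representing measure gives
`R_A(K) ⊆ P_A(K)*`. Conversely, Dirac measures show that the cone generated by the moment vectors
`(u^α)_{α ∈ A}`, `u ∈ K`, lies in `R_A(K)`. This cone is closed: it is `[0, ∞)` times the convex
hull of the moment vectors, which is compact by Carathéodory, and the polynomial `p₀ > 0`
witnessing `K`-fullness is bounded below on that hull by a positive constant, so a bounded part
of the cone only uses bounded scalars. A point outside the cone is strictly separated from it by a
linear functional, i.e. by a polynomial of `ℝ[x]_A` that is nonnegative on `K` and negative there. -/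

open scoped Pointwise

theorem PointedCone.coe_hull_eq_Ici_smul_convexHull {E : Type*} [AddCommGroup E] [Module ℝ E]
    {S : Set E} (hS : S.Nonempty) :
    (PointedCone.hull ℝ S : Set E) = Set.Ici (0 : ℝ) • convexHull ℝ S := by
  apply subset_antisymm
  · intro x hx
    obtain ⟨c, hcS, hc0, rfl⟩ := PointedCone.mem_hull_set.1 hx
    rcases (sum_nonneg fun y _ => hc0 y : 0 ≤ ∑ y ∈ c.support, c y).eq_or_lt with ht | ht
    · obtain ⟨s, hs⟩ := hS
      refine ⟨0, Set.mem_Ici.2 le_rfl, s, subset_convexHull ℝ S hs, ?_⟩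
      have hc : ∀ y ∈ c.support, c y = 0 := (sum_eq_zero_iff_of_nonneg fun y _ => hc0 y).1 ht.symm
      show (0 : ℝ) • s = _
      rw [zero_smul, Finsupp.sum, sum_eq_zero fun y hy => by rw [hc y hy, zero_smul]]
    · refine ⟨_, ht.le, _, c.support.centerMass_mem_convexHull (fun y _ => hc0 y) ht
        fun y hy => hcS hy, ?_⟩
      simp only [centerMass, smul_inv_smul₀ ht.ne', Finsupp.sum]
  · rintro _ ⟨t, ht, d, hd, rfl⟩
    exact (PointedCone.hull ℝ S).smul_mem ht
      (convexHull_min PointedCone.subset_hull (PointedCone.convex _) hd)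

section ConvexGeometry

variable {E : Type*} [NormedAddCommGroup E] [NormedSpace ℝ E] [FiniteDimensional ℝ E]

theorem isCompact_convexHull {S : Set E} (hS : IsCompact S) :
    IsCompact (convexHull ℝ S) := by
  let simplexImage (k : ℕ) : Set E :=
    (fun wz : (Fin k → ℝ) × (Fin k → E) => ∑ i, wz.1 i • wz.2 i) ''
      (stdSimplex ℝ (Fin k) ×ˢ Set.univ.pi fun _ => S)
  -- Carathéodory: a point of the hull is a convex combination of at most `finrank + 1` points.
  have hcover : convexHull ℝ S = ⋃ k ∈ range (Module.finrank ℝ E + 2), simplexImage k := by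
    refine subset_antisymm (fun x hx => ?_) (Set.iUnion₂_subset fun k _ => ?_)
    · obtain ⟨ι, _, z, w, hzS, hind, hw0, hw1, rfl⟩ := eq_pos_convex_span_of_mem_convexHull hx
      let e := Fintype.equivFin ι
      refine Set.mem_biUnion (x := Fintype.card ι)
        (mem_range.2 (Nat.lt_succ_of_le (hind.card_le_finrank_succ.trans
          (Nat.add_le_add_right (Submodule.finrank_le _) 1))))
        ⟨(w ∘ e.symm, z ∘ e.symm), ⟨⟨fun i => (hw0 _).le, ?_⟩, fun i _ => hzS ⟨_, rfl⟩⟩, ?_⟩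
      · simpa [e.symm.sum_comp] using hw1
      · exact e.symm.sum_comp fun j => w j • z j
    · rintro _ ⟨⟨w, z⟩, ⟨hw, hz⟩, rfl⟩
      exact (convex_convexHull ℝ S).sum_mem (fun i _ => hw.1 i) hw.2
        fun i _ => subset_convexHull ℝ S (hz i trivial)
  rw [hcover]
  refine (range _).isCompact_biUnion fun k _ => ((isCompact_stdSimplex ℝ (Fin k)).prod
    (isCompact_univ_pi fun _ => hS)).image ?_
  fun_prop

theorem isClosed_hull_of_isCompact {S : Set E} (hS : IsCompact S)
    (L : E →L[ℝ] ℝ) (hL : ∀ x ∈ S, 0 < L x) : IsClosed (PointedCone.hull ℝ S : Set E) := by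
  rcases S.eq_empty_or_nonempty with rfl | hne
  · simp
  obtain ⟨s, hs, hmin⟩ := hS.exists_isMinOn hne L.continuous.continuousOn
  have hLT : ∀ d ∈ convexHull ℝ S, L s ≤ L d :=
    fun d hd => convexHull_min hmin (convex_halfSpace_ge L.isLinear (L s)) hd
  rw [← closure_subset_iff_isClosed]
  intro x hx
  -- Near `x` the cone only uses bounded scalars, and that part of it is compact.
  set M := (L x + 1) / L s
  have hsub : {z | L z < L x + 1} ∩ (PointedCone.hull ℝ S : Set E) ⊆
      Set.Icc 0 M • convexHull ℝ S := by
    rintro _ ⟨hzL, hz⟩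
    rw [PointedCone.coe_hull_eq_Ici_smul_convexHull hne] at hz
    obtain ⟨t, ht, d, hd, rfl⟩ := hz
    refine ⟨t, ⟨ht, (le_div_iff₀ (hL s hs)).2 ?_⟩, d, hd, rfl⟩
    calc t * L s ≤ t * L d := mul_le_mul_of_nonneg_left (hLT d hd) ht
      _ = L (t • d) := by rw [map_smul, smul_eq_mul]
      _ ≤ L x + 1 := hzL.le
  have hxM : x ∈ Set.Icc 0 M • convexHull ℝ S :=
    (isCompact_Icc.smul_set (isCompact_convexHull hS)).isClosed.closure_subset_iff.2 hsub
      ((isOpen_lt L.continuous continuous_const).inter_closure ⟨lt_add_one (L x), hx⟩)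
  rw [PointedCone.coe_hull_eq_Ici_smul_convexHull hne]
  exact Set.smul_subset_smul_right Set.Icc_subset_Ici_self hxM

end ConvexGeometry

section MomentCone

variable {n : ℕ} (A : Finset (Exp n))

def momentVec (u : Fin n → ℝ) : A → ℝ := fun α => monoEval α u

theorem continuous_momentVec : Continuous (momentVec A) := by
  unfold momentVec monoEval
  fun_prop

theorem pairA_momentVec (p : A → ℝ) (u : Fin n → ℝ) :
    pairA A p (momentVec A u) = evalA A p u := rfl

def pairCLM (p : A → ℝ) : (A → ℝ) →L[ℝ] ℝ := ∑ α, p α • ContinuousLinearMap.proj α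

theorem pairCLM_apply (p y : A → ℝ) : pairCLM A p y = pairA A p y := by
  simp [pairCLM, pairA]

theorem exists_pairA_eq (f : (A → ℝ) →ₗ[ℝ] ℝ) : ∃ p : A → ℝ, ∀ y, f y = pairA A p y :=
  ⟨fun α => f fun β => if α = β then 1 else 0, fun y => by
    simp [LinearMap.pi_apply_eq_sum_univ f y, pairA, mul_comm]⟩

variable {A} {K : Set (Fin n → ℝ)}

theorem pairA_nonneg_of_mem_RAcone {p y : A → ℝ} (hy : y ∈ RAcone A K) (hp : p ∈ PAcone A K) :
    0 ≤ pairA A p y := by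
  obtain ⟨μ, hμK, hμ⟩ := hy
  have hint : pairA A p y = ∫ u, evalA A p u ∂μ := by
    simp only [pairA, evalA]
    rw [integral_finsetSum _ fun α _ => (hμ α).1.const_mul (p α)]
    exact sum_congr rfl fun α _ => by rw [(hμ α).2, integral_const_mul]
  rw [hint]
  exact integral_nonneg_of_ae (measure_mono_null (fun u hu huK => hu (hp u huK)) hμK)

variable (A K) in
def momentCone : PointedCone ℝ (A → ℝ) where
  carrier := RAcone A K
  zero_mem' := ⟨0, rfl, fun α => ⟨integrable_zero_measure, by simp⟩⟩
  add_mem' := by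
    rintro y z ⟨μ, hμK, hμ⟩ ⟨ν, hνK, hν⟩
    refine ⟨μ + ν, by simp [hμK, hνK], fun α => ⟨(hμ α).1.add_measure (hν α).1, ?_⟩⟩
    rw [integral_add_measure (hμ α).1 (hν α).1, Pi.add_apply, (hμ α).2, (hν α).2]
  smul_mem' := by
    rintro ⟨c, hc⟩ y ⟨μ, hμK, hμ⟩
    refine ⟨ENNReal.ofReal c • μ, by simp [hμK],
      fun α => ⟨(hμ α).1.smul_measure ENNReal.ofReal_ne_top, ?_⟩⟩
    rw [integral_smul_measure, ENNReal.toReal_ofReal hc, ← (hμ α).2]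
    rfl

theorem momentVec_mem_momentCone {u : Fin n → ℝ} (hu : u ∈ K) : momentVec A u ∈ momentCone A K :=
  ⟨Measure.dirac u, by simp [hu], fun α => ⟨integrable_dirac (by simp), by simp [momentVec]⟩⟩

variable (A K) in
theorem hull_momentVec_le_momentCone :
    PointedCone.hull ℝ (momentVec A '' K) ≤ momentCone A K :=
  Submodule.span_le.2 <| by
    rintro _ ⟨u, hu, rfl⟩
    exact momentVec_mem_momentCone hu

end MomentCone

theorem statement_3_general {n : ℕ} {A : Finset (Exp n)}
    {K : Set (Fin n → ℝ)} (hKcpt : IsCompact K)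
    (hfull : KFull A K) :
    RAcone A K = {y : A → ℝ | ∀ p ∈ PAcone A K, 0 ≤ pairA A p y} := by
  refine subset_antisymm (fun y hy p hp => pairA_nonneg_of_mem_RAcone hy hp) fun y hy => ?_
  obtain ⟨p₀, hp₀⟩ := hfull
  let C : ProperCone ℝ (A → ℝ) :=
    ⟨PointedCone.hull ℝ (momentVec A '' K),
      isClosed_hull_of_isCompact (hKcpt.image (continuous_momentVec A)) (pairCLM A p₀)
        (by rintro _ ⟨u, hu, rfl⟩; simpa [pairCLM_apply, pairA_momentVec] using hp₀ u hu)⟩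
  suffices hyC : y ∈ C from hull_momentVec_le_momentCone A K hyC
  by_contra hyC
  obtain ⟨f, hfC, hfy⟩ := C.hyperplane_separation_point hyC
  obtain ⟨p, hp⟩ := exists_pairA_eq A f.toLinearMap
  have hpK : p ∈ PAcone A K := fun u hu => by
    simpa [← pairA_momentVec, ← hp] using hfC _ (PointedCone.subset_hull ⟨u, hu, rfl⟩)
  exact (hy p hpK).not_gt (hp y ▸ hfy)

/-- For a nonempty compact `K` and `K`-full `ℝ[x]_A`,
`R_A(K)` equals the dual cone of `P_A(K)`. -/
theorem statement_3 {n : ℕ} (hn : 1 ≤ n) {A : Finset (Exp n)} (hA : A.Nonempty)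
    {K : Set (Fin n → ℝ)} (hKne : K.Nonempty) (hKcpt : IsCompact K)
    (hfull : KFull A K) :
    RAcone A K = {y : A → ℝ | ∀ p ∈ PAcone A K, 0 ≤ pairA A p y} :=
  statement_3_general hKcpt hfull

end
end

section
/- Let K be the nonempty semialgebraic set defined by h and g, let A ⊆ ℕ^n be finite, suppose I(h)+Q(g) is archimedean, and let f ∈ ℝ[x]_A satisfy f > 0 on K. Then the normalized relaxation sections are uniformly bounded: there exist N ∈ ℕ and C > 0 such that for all k ≥ N and every y ∈ S_A^k(K) with ⟨f, y⟩ = 1, one has |y_α| ≤ C for all α ∈ A. -/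
open MeasureTheory MvPolynomial Finset

noncomputable section

/-!
Since `I(h) + Q(g)` is archimedean, Putinar's Positivstellensatz gives `f - t ∈ I(h) + Q(g)` for
some `t > 0`, and every monomial satisfies `l_α ± x^α ∈ I(h) + Q(g)`. These finitely many
certificates have bounded degree, so for large `k` every `z ∈ Φ_k(g) ∩ E_k(h)` is nonnegative on
them; with `⟨f, y⟩ = 1` this gives `t z_0 ≤ 1` and `|y_α| ≤ l_α z_0 ≤ l_α / t`.

Putinar's theorem is proved for an archimedean quadratic module `M` in any `ℝ`-algebra. If no
`f - t` with `t > 0` lies in `M`, Zorn's lemma extends `M` to a maximal quadratic module `Q` with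
the same property. A division argument, approximating `1 / S` by squares up to an error with
nonnegative coefficients, shows `Q ∪ -Q` is everything; then `p ↦ inf {r | r - p ∈ Q}` is an
`ℝ`-algebra homomorphism to `ℝ`, i.e. a point where `M` is nonnegative but `f ≤ 0`.
-/

section QuadraticModule

variable {R : Type*} [CommRing R] {Q : Set R}

structure IsQuadraticModule (Q : Set R) : Prop where
  add_mem {p q : R} : p ∈ Q → q ∈ Q → p + q ∈ Q
  one_mem : 1 ∈ Q
  sq_mul_mem (t : R) {p : R} : p ∈ Q → t ^ 2 * p ∈ Q

namespace IsQuadraticModule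

theorem sq_mem (hQ : IsQuadraticModule Q) (t : R) : t ^ 2 ∈ Q := by
  simpa using hQ.sq_mul_mem t hQ.one_mem

theorem zero_mem (hQ : IsQuadraticModule Q) : (0 : R) ∈ Q := by
  simpa using hQ.sq_mem 0

theorem isSumSq_mul_mem (hQ : IsQuadraticModule Q) {σ p : R} (hσ : IsSumSq σ) (hp : p ∈ Q) :
    σ * p ∈ Q := by
  induction hσ with
  | zero => simpa using hQ.zero_mem
  | @sq_add a σ _ ih => simpa [add_mul, sq] using hQ.add_mem (hQ.sq_mul_mem a hp) ih

theorem isSumSq_mem (hQ : IsQuadraticModule Q) {σ : R} (hσ : IsSumSq σ) : σ ∈ Q := by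
  simpa using hQ.isSumSq_mul_mem hσ hQ.one_mem

variable [Algebra ℝ R]

theorem algebraMap_mul_mem (hQ : IsQuadraticModule Q) {c : ℝ} (hc : 0 ≤ c) {p : R}
    (hp : p ∈ Q) : algebraMap ℝ R c * p ∈ Q := by
  simpa [← map_pow, Real.sq_sqrt hc] using hQ.sq_mul_mem (algebraMap ℝ R √c) hp

theorem mem_of_algebraMap_mul_mem (hQ : IsQuadraticModule Q) {c : ℝ} (hc : 0 < c) {p : R}
    (hp : algebraMap ℝ R c * p ∈ Q) : p ∈ Q := by
  simpa [← mul_assoc, ← map_mul, inv_mul_cancel₀ hc.ne'] using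
    hQ.algebraMap_mul_mem (inv_nonneg.2 hc.le) hp

theorem algebraMap_mem (hQ : IsQuadraticModule Q) {c : ℝ} (hc : 0 ≤ c) :
    algebraMap ℝ R c ∈ Q := by
  simpa using hQ.algebraMap_mul_mem hc hQ.one_mem

end IsQuadraticModule

theorem isQuadraticModule_sUnion {c : Set (Set R)} (hc : ∀ Q ∈ c, IsQuadraticModule Q)
    (hchain : IsChain (· ⊆ ·) c) (hne : c.Nonempty) : IsQuadraticModule (⋃₀ c) where
  add_mem := by
    rintro p q ⟨Q₁, hQ₁, hp⟩ ⟨Q₂, hQ₂, hq⟩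
    rcases hchain.total hQ₁ hQ₂ with h | h
    · exact ⟨Q₂, hQ₂, (hc Q₂ hQ₂).add_mem (h hp) hq⟩
    · exact ⟨Q₁, hQ₁, (hc Q₁ hQ₁).add_mem hp (h hq)⟩
  one_mem := hne.elim fun Q hQ => ⟨Q, hQ, (hc Q hQ).one_mem⟩
  sq_mul_mem t := by
    rintro p ⟨Q, hQ, hp⟩
    exact ⟨Q, hQ, (hc Q hQ).sq_mul_mem t hp⟩

def adjoinQM (Q : Set R) (p : R) : Set R :=
  {q | ∃ a ∈ Q, ∃ σ, IsSumSq σ ∧ q = a + p * σ}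

theorem IsQuadraticModule.adjoinQM (hQ : IsQuadraticModule Q) (p : R) :
    IsQuadraticModule (adjoinQM Q p) where
  add_mem := by
    rintro _ _ ⟨a, ha, σ, hσ, rfl⟩ ⟨b, hb, τ, hτ, rfl⟩
    exact ⟨a + b, hQ.add_mem ha hb, σ + τ, hσ.add hτ, by ring⟩
  one_mem := ⟨1, hQ.one_mem, 0, .zero, by ring⟩
  sq_mul_mem t := by
    rintro _ ⟨a, ha, σ, hσ, rfl⟩
    exact ⟨t ^ 2 * a, hQ.sq_mul_mem t ha, t ^ 2 * σ,
      sq t ▸ (IsSumSq.mul_self t).mul hσ, by ring⟩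

theorem subset_adjoinQM (p : R) : Q ⊆ adjoinQM Q p :=
  fun a ha => ⟨a, ha, 0, .zero, by ring⟩

theorem mem_adjoinQM_self (hQ : IsQuadraticModule Q) (p : R) : p ∈ adjoinQM Q p :=
  ⟨0, hQ.zero_mem, 1, .one, by ring⟩

variable [Algebra ℝ R]

def BoundedBy (Q : Set R) (r : ℝ) (p : R) : Prop :=
  algebraMap ℝ R r + p ∈ Q ∧ algebraMap ℝ R r - p ∈ Q

namespace BoundedBy

theorem mono (hQ : IsQuadraticModule Q) {r s : ℝ} {p : R} (hp : BoundedBy Q r p) (hrs : r ≤ s) :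
    BoundedBy Q s p := by
  have hsr := hQ.algebraMap_mem (sub_nonneg.2 hrs)
  constructor
  · convert hQ.add_mem hsr hp.1 using 1; rw [map_sub]; ring
  · convert hQ.add_mem hsr hp.2 using 1; rw [map_sub]; ring

theorem const (hQ : IsQuadraticModule Q) {r c : ℝ} (hc : |c| ≤ r) :
    BoundedBy Q r (algebraMap ℝ R c) := by
  rw [abs_le] at hc
  constructor
  · simpa using hQ.algebraMap_mem (by linarith : 0 ≤ r + c)
  · simpa using hQ.algebraMap_mem (by linarith : 0 ≤ r - c)

theorem zero (hQ : IsQuadraticModule Q) : BoundedBy Q 0 (0 : R) := by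
  simpa using const (R := R) hQ (abs_zero.le : |(0 : ℝ)| ≤ 0)

theorem neg {r : ℝ} {p : R} (hp : BoundedBy Q r p) : BoundedBy Q r (-p) :=
  ⟨by simpa [sub_eq_add_neg] using hp.2, by simpa [sub_eq_add_neg] using hp.1⟩

theorem add (hQ : IsQuadraticModule Q) {r s : ℝ} {p q : R} (hp : BoundedBy Q r p)
    (hq : BoundedBy Q s q) : BoundedBy Q (r + s) (p + q) := by
  constructor
  · convert hQ.add_mem hp.1 hq.1 using 1; rw [map_add]; ring
  · convert hQ.add_mem hp.2 hq.2 using 1; rw [map_add]; ring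

theorem sub (hQ : IsQuadraticModule Q) {r s : ℝ} {p q : R} (hp : BoundedBy Q r p)
    (hq : BoundedBy Q s q) : BoundedBy Q (r + s) (p - q) := by
  simpa [sub_eq_add_neg] using hp.add hQ hq.neg

theorem sum (hQ : IsQuadraticModule Q) {ι : Type*} (s : Finset ι) {r : ι → ℝ} {p : ι → R}
    (hp : ∀ i ∈ s, BoundedBy Q (r i) (p i)) : BoundedBy Q (∑ i ∈ s, r i) (∑ i ∈ s, p i) := by
  classical
  induction s using Finset.induction_on with
  | empty => simpa using zero hQ
  | insert i s hi ih =>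
    rw [Finset.sum_insert hi, Finset.sum_insert hi]
    exact (hp i (mem_insert_self i s)).add hQ (ih fun j hj => hp j (mem_insert_of_mem hj))

theorem algebraMap_mul (hQ : IsQuadraticModule Q) {c r : ℝ} (hc : 0 ≤ c) {p : R}
    (hp : BoundedBy Q r p) : BoundedBy Q (c * r) (algebraMap ℝ R c * p) := by
  constructor
  · simpa [mul_add] using hQ.algebraMap_mul_mem hc hp.1
  · simpa [mul_sub] using hQ.algebraMap_mul_mem hc hp.2

/-- From `2r (r² - p²) = (r - p)² (r + p) + (r + p)² (r - p)`. -/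
theorem sq_sub_sq_mem (hQ : IsQuadraticModule Q) {r : ℝ} (hr : 0 < r) {p : R}
    (hp : BoundedBy Q r p) : algebraMap ℝ R (r ^ 2) - p ^ 2 ∈ Q := by
  refine hQ.mem_of_algebraMap_mul_mem (by positivity : 0 < 2 * r) ?_
  convert hQ.add_mem (hQ.sq_mul_mem (algebraMap ℝ R r - p) hp.1)
    (hQ.sq_mul_mem (algebraMap ℝ R r + p) hp.2) using 1
  simp only [map_mul, map_pow, map_ofNat]
  ring

/-- From `4ab (ab ± pq) = (bp ± aq)² + ((2ab)² - (bp ∓ aq)²)`. -/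
theorem mul (hQ : IsQuadraticModule Q) {a b : ℝ} (ha : 0 < a) (hb : 0 < b) {p q : R}
    (hp : BoundedBy Q a p) (hq : BoundedBy Q b q) : BoundedBy Q (a * b) (p * q) := by
  set A := algebraMap ℝ R a
  set B := algebraMap ℝ R b
  have hbp : BoundedBy Q (b * a) (B * p) := hp.algebraMap_mul hQ hb.le
  have haq : BoundedBy Q (a * b) (A * q) := hq.algebraMap_mul hQ ha.le
  have hsum := sq_sub_sq_mem hQ (by positivity) (hbp.add hQ haq)
  have hdiff := sq_sub_sq_mem hQ (by positivity) (hbp.sub hQ haq)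
  constructor <;> refine hQ.mem_of_algebraMap_mul_mem (by positivity : 0 < 4 * (a * b)) ?_
  · convert hQ.add_mem (hQ.sq_mem (B * p + A * q)) hdiff using 1
    simp only [A, B, map_mul, map_pow, map_add, map_ofNat]
    ring
  · convert hQ.add_mem (hQ.sq_mem (B * p - A * q)) hsum using 1
    simp only [A, B, map_mul, map_pow, map_add, map_ofNat]
    ring

theorem pow (hQ : IsQuadraticModule Q) {r : ℝ} (hr : 0 < r) {p : R} (hp : BoundedBy Q r p)
    (i : ℕ) : BoundedBy Q (r ^ i) (p ^ i) := by
  induction i with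
  | zero => simpa using const (R := R) hQ (c := 1) (by simp)
  | succ i ih => simpa [pow_succ] using ih.mul hQ (by positivity) hr hp

/-- From `2 ((r + 1)/2 ± p) = (p ± 1)² + (r - p²)`. -/
theorem of_sub_sq_mem (hQ : IsQuadraticModule Q) {r : ℝ} {p : R}
    (hp : algebraMap ℝ R r - p ^ 2 ∈ Q) : BoundedBy Q ((r + 1) / 2) p := by
  constructor <;> refine hQ.mem_of_algebraMap_mul_mem two_pos ?_
  · convert hQ.add_mem (hQ.sq_mem (p + 1)) hp using 1
    rw [mul_add, ← map_mul, mul_div_cancel₀ _ two_ne_zero, map_add, map_one, map_ofNat]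
    ring
  · convert hQ.add_mem (hQ.sq_mem (p - 1)) hp using 1
    rw [mul_sub, ← map_mul, mul_div_cancel₀ _ two_ne_zero, map_add, map_one, map_ofNat]
    ring

end BoundedBy

end QuadraticModule

section Archimedean

variable {R : Type*} [CommRing R] [Algebra ℝ R] {Q : Set R}

def IsArchimedeanQM (Q : Set R) : Prop :=
  ∀ p : R, ∃ r : ℝ, BoundedBy Q r p

namespace IsArchimedeanQM

theorem exists_pos (hQ : IsQuadraticModule Q) (harch : IsArchimedeanQM Q) (p : R) :
    ∃ r : ℝ, 0 < r ∧ BoundedBy Q r p := by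
  obtain ⟨r, hr⟩ := harch p
  exact ⟨max r 1, by positivity, hr.mono hQ (le_max_left r 1)⟩

theorem mono {Q' : Set R} (harch : IsArchimedeanQM Q) (hQQ' : Q ⊆ Q') : IsArchimedeanQM Q' :=
  fun p => (harch p).imp fun _ hr => ⟨hQQ' hr.1, hQQ' hr.2⟩

theorem eq_univ_of_algebraMap_mem (hQ : IsQuadraticModule Q) (harch : IsArchimedeanQM Q)
    {c : ℝ} (hc : c < 0) (hcQ : algebraMap ℝ R c ∈ Q) (p : R) : p ∈ Q := by
  obtain ⟨r, hr, hp⟩ := harch.exists_pos hQ p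
  have hneg : algebraMap ℝ R (r / -c * c) ∈ Q := by
    simpa using hQ.algebraMap_mul_mem (div_nonneg hr.le (neg_nonneg.2 hc.le)) hcQ
  rw [div_mul_eq_mul_div, div_neg, mul_div_cancel_right₀ _ hc.ne] at hneg
  simpa using hQ.add_mem hp.1 hneg

end IsArchimedeanQM

def IsQuadraticModule.boundedSubalgebra (hQ : IsQuadraticModule Q) : Subalgebra ℝ R where
  carrier := {p | ∃ r, BoundedBy Q r p}
  mul_mem' := by
    rintro p q ⟨a, ha⟩ ⟨b, hb⟩
    exact ⟨_, (ha.mono hQ (le_max_left a 1)).mul hQ (by positivity) (by positivity)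
      (hb.mono hQ (le_max_left b 1))⟩
  add_mem' := by
    rintro p q ⟨a, ha⟩ ⟨b, hb⟩
    exact ⟨a + b, ha.add hQ hb⟩
  algebraMap_mem' c := ⟨|c|, BoundedBy.const hQ le_rfl⟩

def IsInfinitesimal (Q : Set R) (p : R) : Prop :=
  ∀ ε : ℝ, 0 < ε → BoundedBy Q ε p

namespace IsInfinitesimal

theorem zero (hQ : IsQuadraticModule Q) : IsInfinitesimal Q (0 : R) :=
  fun _ hε => (BoundedBy.zero hQ).mono hQ hε.le

theorem add (hQ : IsQuadraticModule Q) {p q : R} (hp : IsInfinitesimal Q p)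
    (hq : IsInfinitesimal Q q) : IsInfinitesimal Q (p + q) := fun ε hε => by
  simpa using (hp (ε / 2) (by positivity)).add hQ (hq (ε / 2) (by positivity))

theorem sub (hQ : IsQuadraticModule Q) {p q : R} (hp : IsInfinitesimal Q p)
    (hq : IsInfinitesimal Q q) : IsInfinitesimal Q (p - q) := fun ε hε => by
  simpa using (hp (ε / 2) (by positivity)).sub hQ (hq (ε / 2) (by positivity))

theorem mul_left (hQ : IsQuadraticModule Q) (harch : IsArchimedeanQM Q) {p : R}
    (hp : IsInfinitesimal Q p) (q : R) : IsInfinitesimal Q (q * p) := fun ε hε => by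
  obtain ⟨r, hr, hq⟩ := harch.exists_pos hQ q
  simpa [mul_div_cancel₀ _ hr.ne'] using hq.mul hQ hr (by positivity) (hp (ε / r) (by positivity))

theorem eq_zero_of_algebraMap (hconst : ∀ c : ℝ, algebraMap ℝ R c ∈ Q → 0 ≤ c) {d : ℝ}
    (hd : IsInfinitesimal Q (algebraMap ℝ R d)) : d = 0 := by
  have hbound (ε : ℝ) (hε : 0 < ε) : 0 ≤ ε + d ∧ 0 ≤ ε - d := by
    obtain ⟨h₁, h₂⟩ := hd ε hε
    exact ⟨hconst _ (by simpa using h₁), hconst _ (by simpa using h₂)⟩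
  apply le_antisymm
  · exact le_of_forall_pos_le_add fun ε hε => by linarith [(hbound ε hε).2]
  · exact le_of_forall_pos_le_add fun ε hε => by linarith [(hbound ε hε).1]

end IsInfinitesimal

/-- The constant is the cut `inf {r | r - p ∈ Q}`. -/
theorem exists_isInfinitesimal_sub_algebraMap (hQ : IsQuadraticModule Q)
    (harch : IsArchimedeanQM Q) (htot : ∀ p : R, p ∈ Q ∨ -p ∈ Q)
    (hconst : ∀ c : ℝ, algebraMap ℝ R c ∈ Q → 0 ≤ c) (p : R) :
    ∃ c : ℝ, IsInfinitesimal Q (p - algebraMap ℝ R c) := by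
  set U : Set ℝ := {r | algebraMap ℝ R r - p ∈ Q}
  obtain ⟨r, hr⟩ := harch p
  have hU : U.Nonempty := ⟨r, hr.2⟩
  have hUbdd : BddBelow U := ⟨-r, fun s hs => by
    have := hconst (s + r) (by convert hQ.add_mem hs hr.1 using 1; rw [map_add]; ring)
    linarith⟩
  refine ⟨sInf U, fun ε hε => ⟨?_, ?_⟩⟩
  · by_contra hnot
    have hmem : sInf U - ε ∈ U := by
      change algebraMap ℝ R (sInf U - ε) - p ∈ Q
      convert (htot _).resolve_left hnot using 1
      rw [map_sub]
      ring
    linarith [csInf_le hUbdd hmem]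
  · obtain ⟨s, hs, hslt⟩ := exists_lt_of_csInf_lt hU (by linarith : sInf U < sInf U + ε)
    convert hQ.add_mem hs (hQ.algebraMap_mem (by linarith : 0 ≤ sInf U + ε - s)) using 1
    simp only [map_sub, map_add]
    ring

theorem exists_algHom_nonneg_of_total (hQ : IsQuadraticModule Q) (harch : IsArchimedeanQM Q)
    (htot : ∀ p : R, p ∈ Q ∨ -p ∈ Q) (hconst : ∀ c : ℝ, algebraMap ℝ R c ∈ Q → 0 ≤ c) :
    ∃ φ : R →ₐ[ℝ] ℝ, ∀ q ∈ Q, 0 ≤ φ q := by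
  choose φ hφ using exists_isInfinitesimal_sub_algebraMap hQ harch htot hconst
  have hunique {p : R} {c : ℝ} (hc : IsInfinitesimal Q (p - algebraMap ℝ R c)) : φ p = c := by
    have := IsInfinitesimal.eq_zero_of_algebraMap hconst (d := c - φ p)
      (by simpa [map_sub] using (hφ p).sub hQ hc)
    linarith
  have hzero : IsInfinitesimal Q (0 : R) := IsInfinitesimal.zero hQ
  let Φ : R →ₐ[ℝ] ℝ :=
    { toFun := φ
      map_one' := hunique (by simpa using hzero)
      map_mul' := fun p q => hunique (by
        convert ((hφ p).mul_left hQ harch q).add hQ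
          ((hφ q).mul_left hQ harch (algebraMap ℝ R (φ p))) using 1
        simp only [map_mul]
        ring)
      map_zero' := hunique (by simpa using hzero)
      map_add' := fun p q => hunique (by
        convert (hφ p).add hQ (hφ q) using 1
        simp only [map_add]
        ring)
      commutes' := fun c => hunique (by simpa using hzero) }
  refine ⟨Φ, fun q hq => le_of_forall_pos_le_add fun ε hε => ?_⟩
  have := hconst (ε + φ q) (by
    convert hQ.add_mem ((hφ q) ε hε).2 hq using 1
    rw [map_add]
    ring)
  change 0 ≤ φ q + ε
  linarith

end Archimedean

namespace Polynomial

def nonnegCoeffs : Subsemiring ℝ[X] where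
  carrier := {p | ∀ i, 0 ≤ p.coeff i}
  mul_mem' {p q} hp hq i := by
    rw [coeff_mul]
    exact Finset.sum_nonneg fun x _ => mul_nonneg (hp x.1) (hq x.2)
  one_mem' i := by
    rw [coeff_one]
    split_ifs <;> norm_num
  add_mem' {p q} hp hq i := by
    rw [coeff_add]
    exact add_nonneg (hp i) (hq i)
  zero_mem' i := by simp

theorem C_mem_nonnegCoeffs {c : ℝ} (hc : 0 ≤ c) : C c ∈ nonnegCoeffs := fun i => by
  rw [coeff_C]
  split_ifs <;> simp [hc]

theorem X_mem_nonnegCoeffs : (X : ℝ[X]) ∈ nonnegCoeffs := fun i => by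
  rw [coeff_X]
  split_ifs <;> norm_num

theorem divX_mem_nonnegCoeffs {p : ℝ[X]} (hp : p ∈ nonnegCoeffs) : p.divX ∈ nonnegCoeffs :=
  fun i => by
    rw [coeff_divX]
    exact hp (i + 1)

theorem eval_le_eval_one_of_mem_nonnegCoeffs {p : ℝ[X]} (hp : p ∈ nonnegCoeffs) {ρ : ℝ}
    (hρ₀ : 0 ≤ ρ) (hρ₁ : ρ ≤ 1) : p.eval ρ ≤ p.eval 1 := by
  rw [eval_eq_sum_range, eval_eq_sum_range]
  exact Finset.sum_le_sum fun i _ =>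
    mul_le_mul_of_nonneg_left (by simpa using pow_le_one₀ hρ₀ hρ₁) (hp i)

/-- Inductively `S' = S (1 + (γ/2) X^(m+1))`, where `γ` is the constant coefficient of `F`. -/
theorem exists_one_sub_mul_sq_eq_X_pow_mul (m : ℕ) :
    ∃ S F : ℝ[X], F ∈ nonnegCoeffs ∧ 1 - (1 - X) * S ^ 2 = X ^ (m + 1) * F := by
  induction m with
  | zero => exact ⟨1, 1, one_mem _, by ring⟩
  | succ m ih =>
    obtain ⟨S, F, hF, hSF⟩ := ih
    set c : ℝ[X] := C (F.coeff 0 / 2) with hc_def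
    have hc : c ∈ nonnegCoeffs := C_mem_nonnegCoeffs (by linarith [hF 0])
    have hFc : F = F.divX * X + 2 * c := by
      rw [hc_def, ← map_ofNat C 2, ← C_mul, mul_div_cancel₀ _ two_ne_zero, divX_mul_X_add]
    refine ⟨S * (1 + c * X ^ (m + 1)),
      F.divX + X ^ m * (2 * c * X * F.divX + 3 * c ^ 2) + c ^ 2 * X ^ (2 * m + 1) * F, ?_, ?_⟩
    · have hD := divX_mem_nonnegCoeffs hF
      have hX := X_mem_nonnegCoeffs
      have h2 : (2 : ℝ[X]) ∈ nonnegCoeffs := ofNat_mem _ 2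
      have h3 : (3 : ℝ[X]) ∈ nonnegCoeffs := ofNat_mem _ 3
      refine add_mem (add_mem hD (mul_mem (pow_mem hX _) (add_mem ?_ ?_))) ?_
      · exact mul_mem (mul_mem (mul_mem h2 hc) hX) hD
      · exact mul_mem h3 (pow_mem hc 2)
      · exact mul_mem (mul_mem (pow_mem hc 2) (pow_mem hX _)) hF
    · linear_combination (1 + c * X ^ (m + 1)) ^ 2 * hSF +
        (X ^ (m + 1) + 2 * c * X ^ (2 * m + 2)) * hFc

end Polynomial

section Division

variable {R : Type*} [CommRing R] [Algebra ℝ R] {Q : Set R}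

open Polynomial in
theorem BoundedBy.aeval (hQ : IsQuadraticModule Q) {ρ : ℝ} (hρ : 0 < ρ) {Z : R} (hZ : BoundedBy Q ρ Z) {p : ℝ[X]}
    (hp : p ∈ nonnegCoeffs) : BoundedBy Q (p.eval ρ) (aeval Z p) := by
  rw [aeval_eq_sum_range, eval_eq_sum_range]
  exact BoundedBy.sum hQ _ fun i _ => by
    simpa [Algebra.smul_def] using (hZ.pow hQ hρ i).algebraMap_mul hQ (hp i)

open Polynomial in
/-- Take `s = S(Z)` for the polynomial `S` above: the error `Z^(m+1) F(Z)` is bounded by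
`ρ^(m+1) F(ρ) ≤ ρ^(m+1)`, as `F` has nonnegative coefficients and `F(1) = 1`. -/
theorem exists_boundedBy_one_sub_one_sub_mul_sq (hQ : IsQuadraticModule Q) {ρ : ℝ}
    (hρ₀ : 0 < ρ) (hρ₁ : ρ < 1) {Z : R} (hZ : BoundedBy Q ρ Z) {θ : ℝ} (hθ : 0 < θ) :
    ∃ s : R, BoundedBy Q θ (1 - (1 - Z) * s ^ 2) := by
  obtain ⟨m, hm⟩ := exists_pow_lt_of_lt_one hθ hρ₁
  obtain ⟨S, F, hF, hSF⟩ := exists_one_sub_mul_sq_eq_X_pow_mul m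
  have hF1 : F.eval 1 = 1 := by simpa using (congrArg (eval 1) hSF).symm
  have hFρ : F.eval ρ ≤ 1 :=
    (eval_le_eval_one_of_mem_nonnegCoeffs hF hρ₀.le hρ₁.le).trans hF1.le
  have hbound : eval ρ ((X : ℝ[X]) ^ (m + 1) * F) ≤ θ := calc
    eval ρ ((X : ℝ[X]) ^ (m + 1) * F) = ρ ^ m * ρ * F.eval ρ := by simp [pow_succ]
    _ ≤ ρ ^ m * ρ * 1 := mul_le_mul_of_nonneg_left hFρ (by positivity)
    _ ≤ ρ ^ m := by simpa using mul_le_of_le_one_right (pow_nonneg hρ₀.le m) hρ₁.le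
    _ ≤ θ := hm.le
  refine ⟨aeval Z S, ?_⟩
  have hE := (hZ.aeval hQ hρ₀ (mul_mem (pow_mem X_mem_nonnegCoeffs _) hF)).mono hQ hbound
  rwa [← hSF, map_sub, map_one, map_mul, map_sub, map_one, Polynomial.aeval_X, map_pow] at hE

/-- From `4θ (P + μθ) = 4θ P (1 - E) + (E + θ)² (μ + P) + (E - θ)² (μ - P) + 2μ (θ² - E²)`. -/
theorem add_algebraMap_mem_of_mul_one_sub_mem (hQ : IsQuadraticModule Q) {θ μ : ℝ}
    (hθ : 0 < θ) (hμ : 0 < μ) {P E : R} (hE : BoundedBy Q θ E) (hP : BoundedBy Q μ P)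
    (hPE : P * (1 - E) ∈ Q) : P + algebraMap ℝ R (μ * θ) ∈ Q := by
  refine hQ.mem_of_algebraMap_mul_mem (by positivity : 0 < 4 * θ) ?_
  convert hQ.add_mem (hQ.algebraMap_mul_mem (by positivity : 0 ≤ 4 * θ) hPE)
    (hQ.add_mem (hQ.sq_mul_mem (E + algebraMap ℝ R θ) hP.1)
      (hQ.add_mem (hQ.sq_mul_mem (E - algebraMap ℝ R θ) hP.2)
        (hQ.algebraMap_mul_mem (by positivity : 0 ≤ 2 * μ) (hE.sq_sub_sq_mem hQ hθ)))) using 1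
  simp only [map_mul, map_pow, map_ofNat]
  ring

/-- With `b` an upper bound of `S`, `Z = 1 - S / b` satisfies `|Z| ≤ 1 - ν / b < 1`, and
`P (1 - E) = s² (P S) / b` for `E = 1 - (1 - Z) s²`. -/
theorem add_algebraMap_mem_of_mul_mem (hQ : IsQuadraticModule Q) (harch : IsArchimedeanQM Q)
    {P S : R} {ν : ℝ} (hν : 0 < ν) (hS : S - algebraMap ℝ R ν ∈ Q) (hPS : P * S ∈ Q)
    {ε : ℝ} (hε : 0 < ε) : P + algebraMap ℝ R ε ∈ Q := by
  obtain ⟨c, hc, hSc⟩ := harch.exists_pos hQ S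
  set b := c + ν
  have hb : 0 < b := by positivity
  have hbinv : algebraMap ℝ R b⁻¹ * algebraMap ℝ R b = 1 := by
    rw [← map_mul, inv_mul_cancel₀ hb.ne', map_one]
  have hSb : algebraMap ℝ R b - S ∈ Q := (hSc.mono hQ (by linarith : c ≤ b)).2
  set Z := algebraMap ℝ R b⁻¹ * (algebraMap ℝ R b - S)
  have hZ : BoundedBy Q (1 - ν / b) Z := by
    constructor
    · convert hQ.algebraMap_mul_mem (inv_nonneg.2 hb.le)
        (hQ.add_mem hSb (hQ.algebraMap_mem (by linarith : 0 ≤ b - ν))) using 1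
      simp only [Z, map_sub, map_one, div_eq_inv_mul, map_mul]
      linear_combination (-1 : R) * hbinv
    · convert hQ.algebraMap_mul_mem (inv_nonneg.2 hb.le) hS using 1
      simp only [Z, map_sub, map_one, div_eq_inv_mul, map_mul]
      linear_combination (-1 : R) * hbinv
  have hρ₀ : 0 < 1 - ν / b := by rw [sub_pos, div_lt_one hb]; linarith
  have hρ₁ : 1 - ν / b < 1 := by linarith [div_pos hν hb]
  obtain ⟨μ, hμ, hP⟩ := harch.exists_pos hQ P
  obtain ⟨s, hs⟩ := exists_boundedBy_one_sub_one_sub_mul_sq hQ hρ₀ hρ₁ hZ (div_pos hε hμ)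
  have hPE : P * (1 - (1 - (1 - Z) * s ^ 2)) ∈ Q := by
    convert hQ.algebraMap_mul_mem (inv_nonneg.2 hb.le) (hQ.sq_mul_mem s hPS) using 1
    simp only [Z]
    linear_combination (-(P * s ^ 2)) * hbinv
  simpa [mul_div_cancel₀ _ hμ.ne'] using
    add_algebraMap_mem_of_mul_one_sub_mem hQ (div_pos hε hμ) hμ hs hP hPE

end Division

section Positivstellensatz

variable {R : Type*} [CommRing R] [Algebra ℝ R] {Q : Set R}

def AvoidsShifts (f : R) (Q : Set R) : Prop :=
  ∀ t : ℝ, 0 < t → f - algebraMap ℝ R t ∉ Q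

theorem exists_maximal_avoidsShifts {M : Set R} {f : R} (hM : IsQuadraticModule M)
    (hf : AvoidsShifts f M) :
    ∃ Q, M ⊆ Q ∧ Maximal (fun Q => IsQuadraticModule Q ∧ AvoidsShifts f Q) Q :=
  zorn_subset_nonempty {Q | IsQuadraticModule Q ∧ AvoidsShifts f Q} (fun c hc hchain hne =>
    ⟨⋃₀ c, ⟨isQuadraticModule_sUnion (fun _ hQ => (hc hQ).1) hchain hne,
      fun t ht ht_mem => Exists.elim ht_mem fun _ hQ => (hc hQ.1).2 t ht hQ.2⟩,
      fun _ hQ => Set.subset_sUnion_of_mem hQ⟩) M ⟨hM, hf⟩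

/-- With `l` bounding `p` and `ν = t / 4l`, the product `(f - t + lν) (σ₁ + σ₂ + ν)` lies in `Q`,
and dividing by the second factor leaves `f - t + lν + t/4 = f - t/2`. -/
theorem sub_algebraMap_half_mem (hQ : IsQuadraticModule Q) (harch : IsArchimedeanQM Q)
    {f p s₁ s₂ σ₁ σ₂ : R} {t : ℝ} (ht : 0 < t) (hs₁ : s₁ ∈ Q) (hs₂ : s₂ ∈ Q)
    (hσ₁ : IsSumSq σ₁) (hσ₂ : IsSumSq σ₂) (h₁ : f - algebraMap ℝ R t = s₁ + p * σ₁)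
    (h₂ : f - algebraMap ℝ R t = s₂ - p * σ₂) : f - algebraMap ℝ R (t / 2) ∈ Q := by
  obtain ⟨l, hl, hp⟩ := harch.exists_pos hQ p
  set G := f - algebraMap ℝ R t
  have hG : G * (σ₁ + σ₂) ∈ Q := by
    convert hQ.add_mem (hQ.isSumSq_mul_mem hσ₂ hs₁) (hQ.isSumSq_mul_mem hσ₁ hs₂) using 1
    linear_combination σ₂ * h₁ + σ₁ * h₂
  have hGl : G + algebraMap ℝ R l * σ₁ ∈ Q := by
    convert hQ.add_mem hs₁ (hQ.isSumSq_mul_mem hσ₁ hp.1) using 1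
    linear_combination h₁
  set ν := t / (4 * l)
  have hν : 0 < ν := by positivity
  have hlν : l * ν = t / 4 := by simp only [ν]; field_simp
  have hprod : (G + algebraMap ℝ R (l * ν)) * (σ₁ + σ₂ + algebraMap ℝ R ν) ∈ Q := by
    convert hQ.add_mem (hQ.add_mem hG (hQ.algebraMap_mul_mem hν.le hGl))
      (hQ.add_mem (hQ.algebraMap_mul_mem (by positivity : 0 ≤ l * ν) (hQ.isSumSq_mem hσ₂))
        (hQ.algebraMap_mem (by positivity : 0 ≤ l * ν ^ 2))) using 1
    simp only [map_mul, map_pow]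
    ring
  have hS : σ₁ + σ₂ + algebraMap ℝ R ν - algebraMap ℝ R ν ∈ Q := by
    simpa using hQ.isSumSq_mem (hσ₁.add hσ₂)
  convert add_algebraMap_mem_of_mul_mem hQ harch hν hS hprod (by positivity : 0 < t / 4)
    using 1
  rw [hlν, show t / 2 = t - t / 4 - t / 4 by ring, map_sub, map_sub]
  ring

theorem total_of_maximal_avoidsShifts {f : R}
    (hmax : Maximal (fun Q => IsQuadraticModule Q ∧ AvoidsShifts f Q) Q)
    (harch : IsArchimedeanQM Q) (p : R) : p ∈ Q ∨ -p ∈ Q := by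
  obtain ⟨⟨hQ, hf⟩, hQmax⟩ := hmax
  have hshift (q : R) (hq : q ∉ Q) : ∃ t > 0, ∀ t' ≤ t,
      ∃ s ∈ Q, ∃ σ, IsSumSq σ ∧ f - algebraMap ℝ R t' = s + q * σ := by
    have hnot : ¬ AvoidsShifts f (adjoinQM Q q) := fun hav =>
      hq (hQmax ⟨hQ.adjoinQM q, hav⟩ (subset_adjoinQM q) (mem_adjoinQM_self hQ q))
    simp only [AvoidsShifts, not_forall, not_not] at hnot
    obtain ⟨t, ht, s, hs, σ, hσ, hst⟩ := hnot
    refine ⟨t, ht, fun t' ht' => ⟨s + algebraMap ℝ R (t - t'),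
      hQ.add_mem hs (hQ.algebraMap_mem (sub_nonneg.2 ht')), σ, hσ, ?_⟩⟩
    rw [map_sub]
    linear_combination hst
  by_contra! hp
  obtain ⟨t₁, ht₁, h₁⟩ := hshift p hp.1
  obtain ⟨t₂, ht₂, h₂⟩ := hshift (-p) hp.2
  obtain ⟨s₁, hs₁, σ₁, hσ₁, e₁⟩ := h₁ (min t₁ t₂) (min_le_left _ _)
  obtain ⟨s₂, hs₂, σ₂, hσ₂, e₂⟩ := h₂ (min t₁ t₂) (min_le_right _ _)
  exact hf _ (by positivity) (sub_algebraMap_half_mem hQ harch (lt_min ht₁ ht₂) hs₁ hs₂ hσ₁ hσ₂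
    e₁ (by rw [e₂]; ring))

theorem exists_sub_algebraMap_mem_of_forall_algHom_pos {M : Set R}
    (hM : IsQuadraticModule M) (harch : IsArchimedeanQM M) {f : R}
    (hf : ∀ φ : R →ₐ[ℝ] ℝ, (∀ q ∈ M, 0 ≤ φ q) → 0 < φ f) :
    ∃ t : ℝ, 0 < t ∧ f - algebraMap ℝ R t ∈ M := by
  by_contra! hM_avoid
  obtain ⟨Q, hMQ, hmax⟩ := exists_maximal_avoidsShifts hM hM_avoid
  obtain ⟨hQ, hQ_avoid⟩ := hmax.1
  have harchQ := harch.mono hMQ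
  have htot := total_of_maximal_avoidsShifts hmax harchQ
  have hconst (c : ℝ) (hc : algebraMap ℝ R c ∈ Q) : 0 ≤ c := by
    by_contra! hneg
    exact hQ_avoid 1 one_pos (harchQ.eq_univ_of_algebraMap_mem hQ hneg hc _)
  obtain ⟨φ, hφ⟩ := exists_algHom_nonneg_of_total hQ harchQ htot hconst
  have hφf := hf φ fun q hq => hφ q (hMQ hq)
  have hle := hφ _ ((htot _).resolve_left (hQ_avoid (φ f / 2) (by positivity)))
  simp only [neg_sub, map_sub, AlgHom.commutes, Algebra.algebraMap_self, RingHom.id_apply] at hle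
  linarith

end Positivstellensatz

section Polynomials

variable {σ : Type*}

theorem isArchimedeanQM_of_forall_boundedBy_X {Q : Set (MvPolynomial σ ℝ)}
    (hQ : IsQuadraticModule Q) (hX : ∀ i, ∃ r, BoundedBy Q r (X i)) : IsArchimedeanQM Q := by
  intro p
  have hle : Algebra.adjoin ℝ (Set.range X) ≤ hQ.boundedSubalgebra :=
    Algebra.adjoin_le (Set.range_subset_iff.2 hX)
  exact hle (by simp [adjoin_range_X])

theorem isArchimedeanQM_of_sub_sum_sq_mem [Fintype σ] {Q : Set (MvPolynomial σ ℝ)}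
    (hQ : IsQuadraticModule Q) {r : ℝ} (hr : C r - ∑ i, X i ^ 2 ∈ Q) : IsArchimedeanQM Q := by
  classical
  refine isArchimedeanQM_of_forall_boundedBy_X hQ fun i =>
    ⟨(r + 1) / 2, BoundedBy.of_sub_sq_mem (r := r) hQ ?_⟩
  convert hQ.add_mem hr (hQ.isSumSq_mem
    (IsSumSq.sum_mul_self (Finset.univ.erase i) fun j => (X j : MvPolynomial σ ℝ))) using 1
  rw [← Finset.add_sum_erase _ _ (Finset.mem_univ i), algebraMap_eq]
  simp only [sq]
  ring

/-- Putinar's Positivstellensatz. -/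
theorem exists_sub_C_mem_of_forall_eval_pos {M : Set (MvPolynomial σ ℝ)}
    (hM : IsQuadraticModule M) (harch : IsArchimedeanQM M) {f : MvPolynomial σ ℝ}
    (hf : ∀ x : σ → ℝ, (∀ q ∈ M, 0 ≤ eval x q) → 0 < eval x f) :
    ∃ t : ℝ, 0 < t ∧ f - C t ∈ M := by
  simp only [← algebraMap_eq]
  refine exists_sub_algebraMap_mem_of_forall_algHom_pos hM harch fun φ hφ => ?_
  have hφ_eval (q : MvPolynomial σ ℝ) : φ q = eval (φ ∘ X) q := by
    rw [← aeval_eq_eval, ← aeval_unique φ]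
  simp only [hφ_eval] at hφ ⊢
  exact hf _ hφ

end Polynomials

section Relaxations

variable {n m1 m2 : ℕ}

/-- The quadratic module `I(h) + Q(g)` without degree bounds. -/
def quadModule (h : Fin m1 → MvPolynomial (Fin n) ℝ) (g : Fin m2 → MvPolynomial (Fin n) ℝ) :
    Set (MvPolynomial (Fin n) ℝ) :=
  {p | ∃ σ₀ : MvPolynomial (Fin n) ℝ, ∃ σ : Fin m2 → MvPolynomial (Fin n) ℝ,
    ∃ q : Fin m1 → MvPolynomial (Fin n) ℝ,
    IsSumSq σ₀ ∧ (∀ j, IsSumSq (σ j)) ∧ p = σ₀ + ∑ j, g j * σ j + ∑ i, h i * q i}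

variable (h : Fin m1 → MvPolynomial (Fin n) ℝ) (g : Fin m2 → MvPolynomial (Fin n) ℝ)

theorem isQuadraticModule_quadModule : IsQuadraticModule (quadModule h g) where
  add_mem := by
    rintro _ _ ⟨σ₀, σ, q, hσ₀, hσ, rfl⟩ ⟨τ₀, τ, r, hτ₀, hτ, rfl⟩
    refine ⟨σ₀ + τ₀, σ + τ, q + r, hσ₀.add hτ₀, fun j => (hσ j).add (hτ j), ?_⟩
    simp only [Pi.add_apply, mul_add, Finset.sum_add_distrib]
    ring
  one_mem := ⟨1, 0, 0, .one, fun _ => .zero, by simp⟩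
  sq_mul_mem t := by
    rintro _ ⟨σ₀, σ, q, hσ₀, hσ, rfl⟩
    refine ⟨t ^ 2 * σ₀, fun j => t ^ 2 * σ j, fun i => t ^ 2 * q i,
      sq t ▸ (IsSumSq.mul_self t).mul hσ₀, fun j => sq t ▸ (IsSumSq.mul_self t).mul (hσ j), ?_⟩
    simp only [mul_add, Finset.mul_sum]
    ring_nf

theorem IQSet_subset_quadModule (k : ℕ) : IQSet h g k ⊆ quadModule h g := by
  rintro _ ⟨_, ⟨q, -, rfl⟩, _, ⟨σ₀, σ, hσ₀, -, hσ, rfl⟩, rfl⟩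
  exact ⟨σ₀, σ, q, hσ₀, fun j => (hσ j).1, by ring⟩

theorem mem_semiK_of_forall_nonneg {x : Fin n → ℝ}
    (hx : ∀ q ∈ quadModule h g, 0 ≤ eval x q) : x ∈ semiK h g := by
  classical
  have hhq (i : Fin m1) (q : MvPolynomial (Fin n) ℝ) : 0 ≤ eval x (h i * q) :=
    hx _ ⟨0, 0, Pi.single i q, .zero, fun _ => .zero, by simp [Pi.single_apply]⟩
  refine ⟨fun i => le_antisymm ?_ (by simpa using hhq i 1), fun j => hx _ ?_⟩
  · simpa using hhq i (-1)
  · exact ⟨0, Pi.single j 1, 0, .zero, fun j' => by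
      rcases eq_or_ne j' j with rfl | hj <;> simp [*, IsSumSq.one, IsSumSq.zero],
      by simp [Pi.single_apply]⟩

variable {h g} in
theorem isArchimedeanQM_quadModule (harch : ArchQM h g) : IsArchimedeanQM (quadModule h g) := by
  obtain ⟨r, -, k, hk⟩ := harch
  exact isArchimedeanQM_of_sub_sum_sq_mem (isQuadraticModule_quadModule h g)
    (IQSet_subset_quadModule h g k hk)

end Relaxations

section Riesz

variable {n : ℕ}

def rieszLinear (z : Exp n → ℝ) : MvPolynomial (Fin n) ℝ →ₗ[ℝ] ℝ :=
  Finsupp.linearCombination ℝ (fun α : Fin n →₀ ℕ => z α) ∘ₗ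
    (AddMonoidAlgebra.coeffLinearEquiv ℝ).toLinearMap

theorem rieszLinear_apply (z : Exp n → ℝ) (p : MvPolynomial (Fin n) ℝ) :
    rieszLinear z p = riesz z p := by
  simp [rieszLinear, riesz, Finsupp.linearCombination_apply, sum_def]

theorem riesz_add (z : Exp n → ℝ) (p q : MvPolynomial (Fin n) ℝ) :
    riesz z (p + q) = riesz z p + riesz z q := by
  simp only [← rieszLinear_apply, map_add]

theorem riesz_sub (z : Exp n → ℝ) (p q : MvPolynomial (Fin n) ℝ) :
    riesz z (p - q) = riesz z p - riesz z q := by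
  simp only [← rieszLinear_apply, map_sub]

theorem riesz_sum (z : Exp n → ℝ) {ι : Type*} (s : Finset ι) (p : ι → MvPolynomial (Fin n) ℝ) :
    riesz z (∑ i ∈ s, p i) = ∑ i ∈ s, riesz z (p i) := by
  simp only [← rieszLinear_apply, map_sum]

theorem riesz_monomial (z : Exp n → ℝ) (d : Fin n →₀ ℕ) (c : ℝ) :
    riesz z (monomial d c) = c * z d := by
  classical
  by_cases hc : c = 0
  · simp [hc, riesz]
  · rw [riesz, support_monomial, if_neg hc, Finset.sum_singleton, coeff_monomial, if_pos rfl]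

theorem riesz_C (z : Exp n → ℝ) (c : ℝ) : riesz z (C c) = c * z 0 := by
  simpa using riesz_monomial z 0 c

end Riesz

section Moments

variable {n m1 m2 : ℕ}

open Filter

theorem eventually_riesz_mul_nonneg (q : MvPolynomial (Fin n) ℝ) {σ : MvPolynomial (Fin n) ℝ}
    (hσ : IsSumSq σ) : ∀ᶠ k in atTop, ∀ z : Exp n → ℝ,
      (∀ p : MvPolynomial (Fin n) ℝ, (q * p ^ 2).totalDegree ≤ 2 * k → 0 ≤ riesz z (q * p ^ 2)) →
      0 ≤ riesz z (q * σ) := by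
  induction hσ with
  | zero => exact Eventually.of_forall fun _ _ _ => by simp [riesz]
  | @sq_add a σ _ ih =>
    filter_upwards [ih, eventually_ge_atTop (q * a ^ 2).totalDegree] with k hk hdeg z hz
    rw [mul_add, riesz_add, ← sq]
    exact add_nonneg (hz a (by omega)) (hk z hz)

/-- `r = ((r + 1)/2)² - ((r - 1)/2)²`. -/
theorem eventually_riesz_mul_eq_zero (q r : MvPolynomial (Fin n) ℝ) :
    ∀ᶠ k in atTop, ∀ z : Exp n → ℝ,
      (∀ p : MvPolynomial (Fin n) ℝ, (q * p ^ 2).totalDegree ≤ 2 * k → riesz z (q * p ^ 2) = 0) →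
      riesz z (q * r) = 0 := by
  set u := C (1 / 2) * (r + 1)
  set v := C (1 / 2) * (r - 1)
  have hC : (C (1 / 2) : MvPolynomial (Fin n) ℝ) ^ 2 * 4 = 1 := by
    rw [← C_pow, ← map_ofNat C 4, ← C_mul]
    norm_num
  have hqr : q * r = q * u ^ 2 - q * v ^ 2 := by
    linear_combination (-(q * r)) * hC
  filter_upwards [eventually_ge_atTop (q * u ^ 2).totalDegree,
    eventually_ge_atTop (q * v ^ 2).totalDegree] with k hu hv z hz
  rw [hqr, riesz_sub, hz u (by omega), hz v (by omega), sub_zero]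

theorem eventually_riesz_nonneg {h : Fin m1 → MvPolynomial (Fin n) ℝ}
    {g : Fin m2 → MvPolynomial (Fin n) ℝ} {p : MvPolynomial (Fin n) ℝ} (hp : p ∈ quadModule h g) :
    ∀ᶠ k in atTop, ∀ z ∈ PhiSet g k ∩ ESet h k, 0 ≤ riesz z p := by
  obtain ⟨σ₀, σ, q, hσ₀, hσ, rfl⟩ := hp
  filter_upwards [eventually_riesz_mul_nonneg 1 hσ₀,
    eventually_all.2 fun j => eventually_riesz_mul_nonneg (g j) (hσ j),
    eventually_all.2 fun i => eventually_riesz_mul_eq_zero (h i) (q i)]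
    with k h₀ hg hh z ⟨hzΦ, hzE⟩
  rw [riesz_add, riesz_add, riesz_sum, riesz_sum,
    Finset.sum_eq_zero fun i _ => hh i z (hzE i), add_zero]
  exact add_nonneg (by simpa using h₀ z (by simpa using hzΦ.1))
    (Finset.sum_nonneg fun j _ => hg j z (hzΦ.2 j))

def monomialOf (α : Exp n) : MvPolynomial (Fin n) ℝ :=
  monomial (Finsupp.equivFunOnFinite.symm α) 1

theorem riesz_monomialOf (z : Exp n → ℝ) (α : Exp n) : riesz z (monomialOf α) = z α := by
  simp [monomialOf, riesz_monomial]

theorem eval_toPoly (A : Finset (Exp n)) (f : A → ℝ) (u : Fin n → ℝ) :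
    eval u (toPoly A f) = evalA A f u := by
  simp [toPoly, evalA, monoEval, eval_monomial, Finsupp.prod_fintype _ _ fun i => pow_zero (u i)]

theorem riesz_toPoly (z : Exp n → ℝ) (A : Finset (Exp n)) (f : A → ℝ) :
    riesz z (toPoly A f) = pairA A f (restrA A z) := by
  simp [toPoly, pairA, restrA, riesz_sum, riesz_monomial]

end Moments

theorem statement_6_general {n m1 m2 : ℕ}
    (h : Fin m1 → MvPolynomial (Fin n) ℝ) (g : Fin m2 → MvPolynomial (Fin n) ℝ)
    {A : Finset (Exp n)} (harch : ArchQM h g)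
    (f : A → ℝ) (hf : ∀ u ∈ semiK h g, 0 < evalA A f u) :
    ∃ N : ℕ, ∃ Cb : ℝ, 0 < Cb ∧ ∀ k : ℕ, N ≤ k →
      ∀ y : A → ℝ, (∃ w ∈ PhiSet g k ∩ ESet h k, ∀ α : A, w (α : Exp n) = y α) →
        pairA A f y = 1 → ∀ α : A, |y α| ≤ Cb := by
  have hM := isQuadraticModule_quadModule h g
  have hM_arch := isArchimedeanQM_quadModule harch
  obtain ⟨t, ht, hft⟩ := exists_sub_C_mem_of_forall_eval_pos hM hM_arch (f := toPoly A f)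
    fun x hx => by simpa [eval_toPoly] using hf x (mem_semiK_of_forall_nonneg h g hx)
  choose l hl hl_bound using fun α : A => hM_arch.exists_pos hM (monomialOf (α : Exp n))
  obtain ⟨N, hN⟩ := Filter.eventually_atTop.1 <| (eventually_riesz_nonneg hft).and <|
    Filter.eventually_all.2 fun α => (eventually_riesz_nonneg (hl_bound α).1).and
      (eventually_riesz_nonneg (hl_bound α).2)
  have hl_sum : 0 ≤ ∑ α, l α := Finset.sum_nonneg fun α _ => (hl α).le
  refine ⟨N, (1 + ∑ α, l α) / t, by positivity, fun k hk y ⟨w, hw, hwy⟩ hy α => ?_⟩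
  obtain ⟨hw_f, hw_α⟩ := hN k hk
  have hrestr : restrA A w = y := funext hwy
  have h₀ := hw_f w hw
  have h_add := (hw_α α).1 w hw
  have h_sub := (hw_α α).2 w hw
  simp only [algebraMap_eq, riesz_sub, riesz_add, riesz_C, riesz_toPoly, riesz_monomialOf,
    hrestr, hy, hwy] at h₀ h_add h_sub
  calc |y α| ≤ l α * w 0 := abs_le.2 ⟨by linarith, by linarith⟩
    _ ≤ l α * (1 / t) := mul_le_mul_of_nonneg_left (by rw [le_div_iff₀ ht]; linarith) (hl α).le
    _ ≤ (1 + ∑ α, l α) / t := by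
      rw [mul_one_div]
      gcongr
      linarith [Finset.single_le_sum (fun β _ => (hl β).le) (Finset.mem_univ α)]

/-- If `I(h)+Q(g)` is archimedean and `f ∈ ℝ[x]_A` is positive on `K`,
the normalized sections of the relaxations `S_A^k(K)` are uniformly bounded. -/
theorem statement_6 {n m1 m2 : ℕ} (hn : 1 ≤ n)
    (h : Fin m1 → MvPolynomial (Fin n) ℝ) (g : Fin m2 → MvPolynomial (Fin n) ℝ)
    {A : Finset (Exp n)} (hA : A.Nonempty)
    (hKne : (semiK h g).Nonempty) (harch : ArchQM h g)
    (f : A → ℝ) (hf : ∀ u ∈ semiK h g, 0 < evalA A f u) :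
    ∃ N : ℕ, ∃ Cb : ℝ, 0 < Cb ∧ ∀ k : ℕ, N ≤ k →
      ∀ y : A → ℝ, (∃ w ∈ PhiSet g k ∩ ESet h k, ∀ α : A, w (α : Exp n) = y α) →
        pairA A f y = 1 → ∀ α : A, |y α| ≤ Cb :=
  statement_6_general h g harch f hf
end
end
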